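/- Let J ⊆ K[x,y,z] be the Borel-fixed ideal (x^2, xy, y^2). The ideal I generated by f = x^2 + Axz + Byz + Cz^2, g = xy + Dxz + Eyz + Fz^2, h = y^2 + Gxz + Hyz + Iz^2 satisfies dim_K I_3 = 7 if and only if the 10 polynomial conditions hold: DF−CG−FH+EI = 0, DE−BG−F = 0, D^2−AG+EG−DH+I = 0, CD−AF+EF−BI = 0, BD−AE+E^2−BH+C = 0, CEG−BFG+EFH−E^2I−F^2 = 0, AF^2−EF^2−C^2G−CFH+CEI+BFI = 0, AEF−E^2F−BCG+BEI−CF = 0, AE^2−E^3−B^2G+BEH−CE−BF = 0, ACE−CE^2−ABF+BEF+BCH−B^2I−C^2 = 0. -/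

import Mathlib

/-!
Since `f`, `g`, `h` are quadrics, `I₃` is spanned by the nine products `x·f, …, z·h`. Seven of
them, `x·f, y·f, y·g, y·h, z·f, z·g, z·h`, are unitriangular with respect to the monomials
`x³, x²y, xy², y³, x²z, xyz, y²z`, so they are linearly independent and their span meets the
cubics supported on `xz², yz², z³` only in `0`. Reducing `x·g` and `x·h` by them leaves two such
cubics, so `dim I₃ = 7` exactly when both remainders vanish. Their six coefficients give five of
the ten equations, and the other five are consequences of those.
-/

open MvPolynomial

noncomputable def hilb {K : Type*} [Field K]
    (I : Ideal (MvPolynomial (Fin 3) K)) (d : ℕ) : ℕ :=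
  Module.finrank K
    ↥(Submodule.restrictScalars K I ⊓
        MvPolynomial.homogeneousSubmodule (Fin 3) K d)

open Module Submodule
open scoped Pointwise

namespace MvPolynomial

variable {σ R : Type*} [CommSemiring R]

theorem homogeneousComponent_add_mul_of_isHomogeneous {f : MvPolynomial σ R} {n : ℕ}
    (hf : f.IsHomogeneous n) (m : ℕ) (a : MvPolynomial σ R) :
    homogeneousComponent (m + n) (a * f) = homogeneousComponent m a * f := by
  induction a using MvPolynomial.induction_on' with
  | monomial d r =>
    have hd := isHomogeneous_monomial (σ := σ) r (rfl : d.degree = d.degree)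
    rw [homogeneousComponent_of_mem (hd.mul hf), homogeneousComponent_of_mem hd]
    by_cases h : m = d.degree <;> simp [h]
  | add p q hp hq => simp only [add_mul, map_add, hp, hq]

theorem restrictScalars_span_inf_homogeneousSubmodule {S : Set (MvPolynomial σ R)} {n : ℕ}
    (hS : ∀ s ∈ S, s.IsHomogeneous n) (m : ℕ) :
    (Ideal.span S).restrictScalars R ⊓ homogeneousSubmodule σ R (m + n) =
      homogeneousSubmodule σ R m * span R S := by
  have hSn : span R S ≤ homogeneousSubmodule σ R n := span_le.mpr hS
  refine le_antisymm ?_ (mul_le.mpr fun q hq s hs => ⟨?_, ?_⟩)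
  · rintro p ⟨hpS, hp⟩
    obtain ⟨c, t, htS, -, rfl⟩ := mem_span_iff_exists_finset_subset.mp hpS
    rw [← homogeneousComponent_eq_self hp, map_sum]
    refine sum_mem fun s hs => ?_
    rw [smul_eq_mul, homogeneousComponent_add_mul_of_isHomogeneous (hS s (htS hs))]
    exact mul_mem_mul (homogeneousComponent_mem m (c s)) (subset_span (htS hs))
  · exact Ideal.mul_mem_left _ q (span_le_restrictScalars R _ S hs)
  · exact IsHomogeneous.mul hq (hSn hs)

theorem restrictScalars_span_inf_homogeneousSubmodule_add_one {S : Set (MvPolynomial σ R)}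
    {n : ℕ} (hS : ∀ s ∈ S, s.IsHomogeneous n) :
    (Ideal.span S).restrictScalars R ⊓ homogeneousSubmodule σ R (n + 1) =
      span R (Set.range X * S) := by
  rw [add_comm, restrictScalars_span_inf_homogeneousSubmodule hS,
    homogeneousSubmodule_one_eq_span_X, span_mul_span]

end MvPolynomial

section Triangular

variable {K V ι : Type*} [Field K] [AddCommGroup V] [Module K V] [Fintype ι] [LinearOrder ι]

theorem linearIndependent_pi_comp_of_triangular {v : ι → V} {φ : ι → Dual K V}
    (hdiag : ∀ i, φ i (v i) ≠ 0) (htri : ∀ i j, j < i → φ j (v i) = 0) :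
    LinearIndependent K (LinearMap.pi φ ∘ v) := by
  let M : Matrix ι ι K := Matrix.of fun i j => φ j (v i)
  have hM : M.IsUpperTriangular := htri
  have : IsUnit M := by
    rw [Matrix.isUnit_iff_isUnit_det, Matrix.det_of_isUpperTriangular hM]
    exact (Finset.prod_ne_zero_iff.mpr fun i _ => hdiag i).isUnit
  exact Matrix.linearIndependent_rows_iff_isUnit.mpr this

end Triangular

theorem Submodule.finrank_sup_eq_finrank_left_iff {K V : Type*} [Field K] [AddCommGroup V]
    [Module K V] {T W : Submodule K V} [FiniteDimensional K T] [FiniteDimensional K W]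
    (h : Disjoint T W) : finrank K ↥(T ⊔ W) = finrank K T ↔ W = ⊥ := by
  have := Submodule.finrank_sup_add_finrank_inf_eq T W
  rw [h.eq_bot, finrank_bot] at this
  rw [← Submodule.finrank_eq_zero]
  omega

namespace HilbertSchemeChart

variable {K : Type*} [Field K]

noncomputable def expVec (a b c : ℕ) : Fin 3 →₀ ℕ :=
  Finsupp.single 0 a + Finsupp.single 1 b + Finsupp.single 2 c

theorem expVec_inj {a b c a' b' c' : ℕ} :
    expVec a b c = expVec a' b' c' ↔ a = a' ∧ b = b' ∧ c = c' := by
  refine ⟨fun h => ?_, by rintro ⟨rfl, rfl, rfl⟩; rfl⟩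
  have h0 := DFunLike.congr_fun h 0
  have h1 := DFunLike.congr_fun h 1
  have h2 := DFunLike.congr_fun h 2
  simp only [expVec, Finsupp.add_apply, Finsupp.single_apply] at h0 h1 h2
  simp_all

theorem expVec_add (a b c a' b' c' : ℕ) :
    expVec a b c + expVec a' b' c' = expVec (a + a') (b + b') (c + c') := by
  simp only [expVec, Finsupp.single_add]; abel

theorem X_eq_monomial_expVec :
    (X 0 : MvPolynomial (Fin 3) K) = monomial (expVec 1 0 0) 1 ∧
    (X 1 : MvPolynomial (Fin 3) K) = monomial (expVec 0 1 0) 1 ∧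
    (X 2 : MvPolynomial (Fin 3) K) = monomial (expVec 0 0 1) 1 := by
  simp [expVec, X]

theorem monomial_expVec (a b c : ℕ) (r : K) :
    monomial (expVec a b c) r = C r * X 0 ^ a * X 1 ^ b * X 2 ^ c := by
  simp [X_pow_eq_monomial, monomial_mul, C_mul_monomial, expVec]

noncomputable def quadric (lead : MvPolynomial (Fin 3) K) (a : Fin 3 → K) :
    MvPolynomial (Fin 3) K :=
  lead + a 0 • (X 0 * X 2) + a 1 • (X 1 * X 2) + a 2 • X 2 ^ 2

theorem quadric_isHomogeneous {lead : MvPolynomial (Fin 3) K} (hlead : lead.IsHomogeneous 2)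
    (a : Fin 3 → K) : (quadric lead a).IsHomogeneous 2 := by
  have hX := isHomogeneous_X K (σ := Fin 3)
  refine ((hlead.add ?_).add ?_).add ?_ <;> refine (homogeneousSubmodule _ K 2).smul_mem _ ?_
  exacts [(hX 0).mul (hX 2), (hX 1).mul (hX 2), (hX 2).pow 2]

noncomputable def pivotExp : Fin 7 → Fin 3 →₀ ℕ :=
  ![expVec 3 0 0, expVec 2 1 0, expVec 1 2 0, expVec 0 3 0, expVec 2 0 1, expVec 1 1 1,
    expVec 0 2 1]

noncomputable def pivotCoeff (j : Fin 7) : Dual K (MvPolynomial (Fin 3) K) :=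
  lcoeff K (pivotExp j)

noncomputable def zSqCubic (α β γ : K) : MvPolynomial (Fin 3) K :=
  monomial (expVec 1 0 2) α + monomial (expVec 0 1 2) β + monomial (expVec 0 0 3) γ

theorem zSqCubic_eq_zero_iff {α β γ : K} :
    zSqCubic α β γ = 0 ↔ α = 0 ∧ β = 0 ∧ γ = 0 := by
  refine ⟨fun h => ⟨?_, ?_, ?_⟩, by rintro ⟨rfl, rfl, rfl⟩; simp [zSqCubic]⟩
  · simpa [zSqCubic, coeff_monomial, expVec_inj] using congrArg (coeff (expVec 1 0 2)) h
  · simpa [zSqCubic, coeff_monomial, expVec_inj] using congrArg (coeff (expVec 0 1 2)) h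
  · simpa [zSqCubic, coeff_monomial, expVec_inj] using congrArg (coeff (expVec 0 0 3)) h

theorem zSqCubic_mem_ker_pivotCoeff (α β γ : K) :
    zSqCubic α β γ ∈ LinearMap.ker (LinearMap.pi pivotCoeff) := by
  ext j
  fin_cases j <;> simp [zSqCubic, pivotCoeff, pivotExp, coeff_monomial, expVec_inj]

variable (a b c : Fin 3 → K)

noncomputable def quadrics : Set (MvPolynomial (Fin 3) K) :=
  {quadric (X 0 ^ 2) a, quadric (X 0 * X 1) b, quadric (X 1 ^ 2) c}

theorem restrictScalars_span_quadrics_inf_homogeneousSubmodule_three :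
    (Ideal.span (quadrics a b c)).restrictScalars K ⊓ homogeneousSubmodule (Fin 3) K 3 =
      span K (Set.range X * quadrics a b c) := by
  refine restrictScalars_span_inf_homogeneousSubmodule_add_one ?_
  have hX := isHomogeneous_X K (σ := Fin 3)
  rintro _ (rfl | rfl | rfl) <;> apply quadric_isHomogeneous
  exacts [(hX 0).pow 2, (hX 0).mul (hX 1), (hX 1).pow 2]

noncomputable def pivotCubics : Fin 7 → MvPolynomial (Fin 3) K :=
  ![X 0 * quadric (X 0 ^ 2) a, X 1 * quadric (X 0 ^ 2) a, X 1 * quadric (X 0 * X 1) b,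
    X 1 * quadric (X 1 ^ 2) c, X 2 * quadric (X 0 ^ 2) a, X 2 * quadric (X 0 * X 1) b,
    X 2 * quadric (X 1 ^ 2) c]

theorem linearIndependent_pivotCoeff_comp_pivotCubics :
    LinearIndependent K (LinearMap.pi pivotCoeff ∘ pivotCubics a b c) := by
  refine linearIndependent_pi_comp_of_triangular (fun i => ?_) (fun i j hji => ?_) <;>
    fin_cases i <;> (try fin_cases j) <;> (try exact absurd hji (by decide)) <;>
    simp [pivotCoeff, pivotExp, pivotCubics, quadric, mul_add, pow_two, X_eq_monomial_expVec,
      monomial_mul, expVec_add, smul_monomial, coeff_monomial, expVec_inj]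

noncomputable def reductionXG : MvPolynomial (Fin 3) K :=
  X 1 * quadric (X 0 ^ 2) a + b 0 • (X 2 * quadric (X 0 ^ 2) a)
    + (b 1 - a 0) • (X 2 * quadric (X 0 * X 1) b) - a 1 • (X 2 * quadric (X 1 ^ 2) c)
    - X 0 * quadric (X 0 * X 1) b

noncomputable def reductionXH : MvPolynomial (Fin 3) K :=
  X 1 * quadric (X 0 * X 1) b + c 0 • (X 2 * quadric (X 0 ^ 2) a)
    + (c 1 - b 0) • (X 2 * quadric (X 0 * X 1) b) - b 1 • (X 2 * quadric (X 1 ^ 2) c)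
    - X 0 * quadric (X 1 ^ 2) c

theorem reductionXG_eq : reductionXG a b c =
    zSqCubic (b 0 * b 1 - a 1 * c 0 - b 2) (a 1 * b 0 - a 0 * b 1 + b 1 ^ 2 - a 1 * c 1 + a 2)
      (a 2 * b 0 - a 0 * b 2 + b 1 * b 2 - a 1 * c 2) := by
  simp only [reductionXG, zSqCubic, quadric, monomial_expVec, smul_eq_C_mul, map_add, map_sub,
    map_mul, map_pow]
  ring

theorem reductionXH_eq : reductionXH a b c =
    zSqCubic (a 0 * c 0 - b 0 ^ 2 - b 1 * c 0 + b 0 * c 1 - c 2) (a 1 * c 0 + b 2 - b 0 * b 1)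
      (a 2 * c 0 + b 2 * c 1 - b 0 * b 2 - b 1 * c 2) := by
  simp only [reductionXH, zSqCubic, quadric, monomial_expVec, smul_eq_C_mul, map_add, map_sub,
    map_mul, map_pow]
  ring

theorem span_X_mul_quadrics :
    span K (Set.range X * quadrics a b c) =
      span K (Set.range (pivotCubics a b c) ∪ {reductionXG a b c, reductionXH a b c}) := by
  apply le_antisymm <;> rw [span_le]
  · set U := span K (Set.range (pivotCubics a b c) ∪ {reductionXG a b c, reductionXH a b c})
    have hpiv (k : Fin 7) : pivotCubics a b c k ∈ U := subset_span (Or.inl ⟨k, rfl⟩)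
    have hxg : X 0 * quadric (X 0 * X 1) b ∈ U :=
      (sub_mem_iff_right U (sub_mem (add_mem (add_mem (hpiv 1) (smul_mem _ _ (hpiv 4)))
        (smul_mem _ _ (hpiv 5))) (smul_mem _ _ (hpiv 6)))).mp
        (subset_span (Or.inr (Or.inl rfl)) : reductionXG a b c ∈ U)
    have hxh : X 0 * quadric (X 1 ^ 2) c ∈ U :=
      (sub_mem_iff_right U (sub_mem (add_mem (add_mem (hpiv 2) (smul_mem _ _ (hpiv 4)))
        (smul_mem _ _ (hpiv 5))) (smul_mem _ _ (hpiv 6)))).mp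
        (subset_span (Or.inr (Or.inr rfl)) : reductionXH a b c ∈ U)
    rintro _ ⟨_, ⟨i, rfl⟩, q, hq, rfl⟩
    rcases hq with rfl | rfl | rfl <;> fin_cases i
    exacts [hpiv 0, hpiv 1, hpiv 4, hxg, hpiv 2, hpiv 5, hxh, hpiv 3, hpiv 6]
  · have hX (i : Fin 3) {q} (hq : q ∈ quadrics a b c) :
        X i * q ∈ span K (Set.range X * quadrics a b c) :=
      subset_span (Set.mul_mem_mul (Set.mem_range_self i) hq)
    have hf : quadric (X 0 ^ 2) a ∈ quadrics a b c := Or.inl rfl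
    have hg : quadric (X 0 * X 1) b ∈ quadrics a b c := Or.inr (Or.inl rfl)
    have hh : quadric (X 1 ^ 2) c ∈ quadrics a b c := Or.inr (Or.inr rfl)
    rintro _ (⟨i, rfl⟩ | rfl | rfl)
    · fin_cases i
      exacts [hX 0 hf, hX 1 hf, hX 1 hg, hX 1 hh, hX 2 hf, hX 2 hg, hX 2 hh]
    · exact sub_mem (sub_mem (add_mem (add_mem (hX 1 hf) (smul_mem _ _ (hX 2 hf)))
        (smul_mem _ _ (hX 2 hg))) (smul_mem _ _ (hX 2 hh))) (hX 0 hg)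
    · exact sub_mem (sub_mem (add_mem (add_mem (hX 1 hg) (smul_mem _ _ (hX 2 hf)))
        (smul_mem _ _ (hX 2 hg))) (smul_mem _ _ (hX 2 hh))) (hX 0 hh)

theorem finrank_span_X_mul_quadrics_eq_seven_iff :
    finrank K (span K (Set.range X * quadrics a b c)) = 7 ↔
      reductionXG a b c = 0 ∧ reductionXH a b c = 0 := by
  have hli := linearIndependent_pivotCoeff_comp_pivotCubics a b c
  have hdisj : Disjoint (span K (Set.range (pivotCubics a b c)))
      (span K {reductionXG a b c, reductionXH a b c}) := by
    refine (range_ker_disjoint hli).mono_right (span_le.mpr ?_)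
    rintro _ (rfl | rfl)
    · rw [SetLike.mem_coe, reductionXG_eq]; exact zSqCubic_mem_ker_pivotCoeff _ _ _
    · rw [SetLike.mem_coe, reductionXH_eq]; exact zSqCubic_mem_ker_pivotCoeff _ _ _
  have h7 : finrank K (span K (Set.range (pivotCubics a b c))) = 7 := by
    rw [finrank_span_eq_card hli.of_comp, Fintype.card_fin]
  have := FiniteDimensional.span_of_finite K (Set.finite_range (pivotCubics a b c))
  have := FiniteDimensional.span_of_finite K (Set.toFinite {reductionXG a b c, reductionXH a b c})
  have hsup := finrank_sup_eq_finrank_left_iff hdisj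
  rw [h7] at hsup
  rw [span_X_mul_quadrics, span_union, hsup, span_eq_bot]
  simp

end HilbertSchemeChart

open HilbertSchemeChart

theorem hilbert_scheme_three_points_chart_general {K : Type*} [Field K] (A B C D E F G H I : K)
    (x y z : MvPolynomial (Fin 3) K) (hx : x = X 0) (hy : y = X 1) (hz : z = X 2)
    (f g h : MvPolynomial (Fin 3) K)
    (hf : f = x ^ 2 + A • (x * z) + B • (y * z) + C • z ^ 2)
    (hg : g = x * y + D • (x * z) + E • (y * z) + F • z ^ 2)
    (hh : h = y ^ 2 + G • (x * z) + H • (y * z) + I • z ^ 2)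
    (Idl : Ideal (MvPolynomial (Fin 3) K)) (hIdl : Idl = Ideal.span {f, g, h}) :
    hilb Idl 3 = 7 ↔
      (D * F - C * G - F * H + E * I = 0 ∧
       D * E - B * G - F = 0 ∧
       D ^ 2 - A * G + E * G - D * H + I = 0 ∧
       C * D - A * F + E * F - B * I = 0 ∧
       B * D - A * E + E ^ 2 - B * H + C = 0 ∧
       C * E * G - B * F * G + E * F * H - E ^ 2 * I - F ^ 2 = 0 ∧
       A * F ^ 2 - E * F ^ 2 - C ^ 2 * G - C * F * H + C * E * I + B * F * I = 0 ∧
       A * E * F - E ^ 2 * F - B * C * G + B * E * I - C * F = 0 ∧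
       A * E ^ 2 - E ^ 3 - B ^ 2 * G + B * E * H - C * E - B * F = 0 ∧
       A * C * E - C * E ^ 2 - A * B * F + B * E * F + B * C * H - B ^ 2 * I - C ^ 2 = 0) := by
  subst hx hy hz hf hg hh hIdl
  change finrank K ↥((Ideal.span (quadrics ![A, B, C] ![D, E, F] ![G, H, I])).restrictScalars K
    ⊓ homogeneousSubmodule (Fin 3) K 3) = 7 ↔ _
  rw [restrictScalars_span_quadrics_inf_homogeneousSubmodule_three,
    finrank_span_X_mul_quadrics_eq_seven_iff, reductionXG_eq, reductionXH_eq,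
    zSqCubic_eq_zero_iff, zSqCubic_eq_zero_iff]
  simp only [Matrix.cons_val]
  constructor
  · rintro ⟨⟨h2, h5, h4⟩, h3, -, h1⟩
    exact ⟨by linear_combination -h1, h2, by linear_combination -h3, h4, h5,
      by linear_combination E * h1 + F * h2, by linear_combination -C * h1 - F * h4,
      by linear_combination C * h2 - E * h4, by linear_combination B * h2 - E * h5,
      by linear_combination B * h4 - C * h5⟩
  · rintro ⟨h1, h2, h3, h4, h5, -⟩
    exact ⟨⟨h2, h5, h4⟩, by linear_combination -h3, by linear_combination -h2,
      by linear_combination -h1⟩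

/-- For `f = x² + Axz + Byz + Cz²`, `g = xy + Dxz + Eyz + Fz²`,
`h = y² + Gxz + Hyz + Iz²` in `K[x,y,z]`, the ideal `(f,g,h)` has degree-3 graded
piece of dimension 7 if and only if the ten listed polynomial equations in
`A,…,I` hold. -/
theorem hilbert_scheme_three_points_chart {K : Type*} [Field K] [CharZero K]
    [IsAlgClosed K] (A B C D E F G H I : K)
    (x y z : MvPolynomial (Fin 3) K) (hx : x = X 0) (hy : y = X 1) (hz : z = X 2)
    (f g h : MvPolynomial (Fin 3) K)
    (hf : f = x ^ 2 + A • (x * z) + B • (y * z) + C • z ^ 2)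
    (hg : g = x * y + D • (x * z) + E • (y * z) + F • z ^ 2)
    (hh : h = y ^ 2 + G • (x * z) + H • (y * z) + I • z ^ 2)
    (Idl : Ideal (MvPolynomial (Fin 3) K)) (hIdl : Idl = Ideal.span {f, g, h}) :
    hilb Idl 3 = 7 ↔
      (D * F - C * G - F * H + E * I = 0 ∧
       D * E - B * G - F = 0 ∧
       D ^ 2 - A * G + E * G - D * H + I = 0 ∧
       C * D - A * F + E * F - B * I = 0 ∧
       B * D - A * E + E ^ 2 - B * H + C = 0 ∧
       C * E * G - B * F * G + E * F * H - E ^ 2 * I - F ^ 2 = 0 ∧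
       A * F ^ 2 - E * F ^ 2 - C ^ 2 * G - C * F * H + C * E * I + B * F * I = 0 ∧
       A * E * F - E ^ 2 * F - B * C * G + B * E * I - C * F = 0 ∧
       A * E ^ 2 - E ^ 3 - B ^ 2 * G + B * E * H - C * E - B * F = 0 ∧
       A * C * E - C * E ^ 2 - A * B * F + B * E * F + B * C * H - B ^ 2 * I - C ^ 2 = 0) :=
  hilbert_scheme_three_points_chart_general A B C D E F G H I x y z hx hy hz f g h hf hg hh Idl hIdl
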